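/- arXiv:2503.18444 — 6 statements merged into one kernel-verified Lean document; each statement's English description precedes it below -/
import Mathlib

section
/- The spectrum of the generalized Laplacian L_g(γ) is independent of the dominance coefficient: for every γ > 0, the set of eigenvalues (over ℂ, with multiplicities, i.e., the characteristic polynomial) of L_g(γ) coincides with that of L_g(1). -/
/-!
With `S = diag(γ on V₁, 1 on V₂)`, one has `(S M S⁻¹)ᵢⱼ = sᵢ Mᵢⱼ / sⱼ`, which multiplies the
`V₁ × V₂` block by `γ`, the `V₂ × V₁` block by `γ⁻¹` and fixes the diagonal blocks. Hence
`A_g(γ) = S A_g(1) S⁻¹`, while the diagonal `D_g` commutes with `S`, so `L_g(γ) = S L_g(1) S⁻¹`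
and similar matrices have the same characteristic polynomial.
-/

open Matrix

theorem Matrix.charpoly_eq_of_apply_eq_diagonal_conj {n R : Type*} [Fintype n] [DecidableEq n]
    [CommRing R] (c : n → Rˣ) {M N : Matrix n n R}
    (h : ∀ i j, N i j = c i * M i j * (((c j)⁻¹ : Rˣ) : R)) : N.charpoly = M.charpoly := by
  have hN : N = diagonal (fun i ↦ (c i : R)) * M * diagonal (fun i ↦ (((c i)⁻¹ : Rˣ) : R)) := by
    ext i j
    simp [h, diagonal_mul, mul_diagonal]
  rw [hN, charpoly_mul_comm, ← mul_assoc, diagonal_mul_diagonal]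
  simp

theorem Matrix.diagonal_apply_eq_conj {n R : Type*} [DecidableEq n] [CommRing R]
    (c : n → Rˣ) (d : n → R) (i j : n) :
    diagonal d i j = c i * diagonal d i j * (((c j)⁻¹ : Rˣ) : R) := by
  rcases eq_or_ne i j with rfl | hij
  · rw [mul_right_comm, Units.mul_inv, one_mul]
  · simp [hij]

/-- `A_g(γ)`, with `Fin n` indexed from `0`: `V₁ = {i | i < r}` and `V₂ = {i | r ≤ i}`. -/
noncomputable def generalizedAdjacency {n : ℕ} (r : ℕ) (A : Matrix (Fin n) (Fin n) ℝ) (γ : ℝ) :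
    Matrix (Fin n) (Fin n) ℝ :=
  Matrix.of fun i j ↦
    if ((i : ℕ) < r ↔ (j : ℕ) < r) then A i j
    else if (i : ℕ) < r then γ * A i j
    else γ⁻¹ * A i j

def blockScaling {n : ℕ} (r : ℕ) (γ : ℝˣ) : Fin n → ℝˣ :=
  fun i ↦ if (i : ℕ) < r then γ else 1

theorem generalizedAdjacency_apply_eq_conj {n : ℕ} (r : ℕ) (A : Matrix (Fin n) (Fin n) ℝ)
    (γ : ℝˣ) (i j : Fin n) :
    generalizedAdjacency r A γ i j =
      blockScaling r γ i * generalizedAdjacency r A 1 i j *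
        (((blockScaling r γ j)⁻¹ : ℝˣ) : ℝ) := by
  have hγ : (γ : ℝ) ≠ 0 := γ.ne_zero
  by_cases hi : (i : ℕ) < r <;> by_cases hj : (j : ℕ) < r <;>
    simp [generalizedAdjacency, blockScaling, hi, hj] <;> field_simp

theorem generalized_laplacian_spectrum_invariance_general
    (n r : ℕ)
    (A : Matrix (Fin n) (Fin n) ℝ)
    (Ag Lg : ℝ → Matrix (Fin n) (Fin n) ℝ) (Dg : Matrix (Fin n) (Fin n) ℝ)
    (hAg : ∀ (γ : ℝ) (i j : Fin n), Ag γ i j =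
      if ((i : ℕ) < r ↔ (j : ℕ) < r) then A i j
      else if (i : ℕ) < r then γ * A i j
      else γ⁻¹ * A i j)
    (hDg : Dg = Matrix.diagonal (fun i : Fin n =>
      (∑ j : Fin n, if ((i : ℕ) < r ↔ (j : ℕ) < r) then A i j else 0) -
      (∑ j : Fin n, if ((i : ℕ) < r ↔ (j : ℕ) < r) then 0 else A i j)))
    (hLg : ∀ γ : ℝ, Lg γ = Dg - Ag γ)
    (γ : ℝ) (hγ : 0 < γ) :
    Matrix.charpoly ((Lg γ).map (algebraMap ℝ ℂ)) =
      Matrix.charpoly ((Lg 1).map (algebraMap ℝ ℂ)) := by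
  have hAg' : Ag = generalizedAdjacency r A := funext fun γ ↦ Matrix.ext (hAg γ)
  set u : ℝˣ := Units.mk0 γ hγ.ne'
  have hconj : (Lg u).charpoly = (Lg 1).charpoly := by
    refine charpoly_eq_of_apply_eq_diagonal_conj (blockScaling r u) fun i j ↦ ?_
    rw [hLg, hLg, hAg', hDg, Matrix.sub_apply, Matrix.sub_apply, mul_sub, sub_mul,
      ← diagonal_apply_eq_conj, ← generalizedAdjacency_apply_eq_conj]
  rw [charpoly_map, charpoly_map, ← hconj, Units.val_mk0]

/-- The spectrum of the generalized Laplacian `L_g(γ)` is independent of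
the dominance coefficient: for every `γ > 0`, the eigenvalues of `L_g(γ)` over `ℂ`,
counted with multiplicities (i.e., the characteristic polynomial), coincide with
those of `L_g(1)`. -/
theorem generalized_laplacian_spectrum_invariance
    (n r : ℕ) (hn : 2 ≤ n) (hr : 1 ≤ r) (hrn : r < n)
    (A : Matrix (Fin n) (Fin n) ℝ) (hA0 : ∀ i : Fin n, A i i = 0)
    (Ag Lg : ℝ → Matrix (Fin n) (Fin n) ℝ) (Dg : Matrix (Fin n) (Fin n) ℝ)
    (hAg : ∀ (γ : ℝ) (i j : Fin n), Ag γ i j =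
      if ((i : ℕ) < r ↔ (j : ℕ) < r) then A i j
      else if (i : ℕ) < r then γ * A i j
      else γ⁻¹ * A i j)
    (hDg : Dg = Matrix.diagonal (fun i : Fin n =>
      (∑ j : Fin n, if ((i : ℕ) < r ↔ (j : ℕ) < r) then A i j else 0) -
      (∑ j : Fin n, if ((i : ℕ) < r ↔ (j : ℕ) < r) then 0 else A i j)))
    (hLg : ∀ γ : ℝ, Lg γ = Dg - Ag γ)
    (γ : ℝ) (hγ : 0 < γ) :
    Matrix.charpoly ((Lg γ).map (algebraMap ℝ ℂ)) =
      Matrix.charpoly ((Lg 1).map (algebraMap ℝ ℂ)) :=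
  generalized_laplacian_spectrum_invariance_general n r A Ag Lg Dg hAg hDg hLg γ hγ
end

section
/- If A is symmetric, then the transformed generalized Laplacian L_gz := P L_g P^{-1} equals D_g − R A R^{-1} and is a symmetric matrix, where P = R Q^{-1}. -/
/-!
The cross-block rescaling of `A_g` is a diagonal similarity: `A_g = Q A Q⁻¹`. Since `D_g` is
diagonal it commutes with `Q` and `R`, so `L_g = Q (D_g - A) Q⁻¹` and conjugating by
`P = R Q⁻¹` gives `R (D_g - A) R⁻¹ = D_g - R A R⁻¹`. As `R` is a symmetric involution,
`R A R⁻¹ = R A Rᵀ` is symmetric whenever `A` is.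
-/

namespace Matrix

variable {n : Type*} [Fintype n] [DecidableEq n]

section CommRing

variable {α : Type*} [CommRing α]

theorem conj_eq_self_of_commute {Q D : Matrix n n α} (hQ : IsUnit Q.det) (h : Commute Q D) :
    Q * D * Q⁻¹ = D := by
  rw [h.eq, mul_nonsing_inv_cancel_right _ _ hQ]

theorem mul_inv_conj_conj {Q : Matrix n n α} (hQ : IsUnit Q.det) (R M : Matrix n n α) :
    R * Q⁻¹ * (Q * M * Q⁻¹) * (R * Q⁻¹)⁻¹ = R * M * R⁻¹ := by
  rw [Matrix.mul_inv_rev, nonsing_inv_nonsing_inv _ hQ]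
  simp only [Matrix.mul_assoc, nonsing_inv_mul_cancel_left _ _ hQ]

theorem IsSymm.conj_of_isSymm_of_mul_self_eq_one {A R : Matrix n n α} (hA : A.IsSymm)
    (hR : R.IsSymm) (hRR : R * R = 1) : (R * A * R⁻¹).IsSymm := by
  rw [inv_eq_left_inv hRR, IsSymm, transpose_mul, transpose_mul, hR.eq, hA.eq,
    Matrix.mul_assoc]

end CommRing

section Field

variable {K : Type*} [Field K]

theorem inv_diagonal_of_ne_zero {d : n → K} (hd : ∀ i, d i ≠ 0) :
    (diagonal d)⁻¹ = diagonal fun i => (d i)⁻¹ :=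
  inv_eq_left_inv <| by
    rw [diagonal_mul_diagonal, ← diagonal_one]
    exact congrArg diagonal (funext fun i => inv_mul_cancel₀ (hd i))

theorem isUnit_det_diagonal_of_ne_zero {d : n → K} (hd : ∀ i, d i ≠ 0) :
    IsUnit (diagonal d).det := by
  rw [det_diagonal]
  exact (Finset.prod_ne_zero_iff.2 fun i _ => hd i).isUnit

theorem diagonal_conj_apply {d : n → K} (hd : ∀ i, d i ≠ 0) (M : Matrix n n K) (i j : n) :
    (diagonal d * M * (diagonal d)⁻¹) i j = d i * M i j / d j := by
  rw [inv_diagonal_of_ne_zero hd, mul_diagonal, diagonal_mul, div_eq_mul_inv]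

end Field

end Matrix

open Matrix

theorem transformed_laplacian_symmetric_general
    (n r : ℕ)
    (γ : ℝ) (hγ : 0 < γ)
    (A Ag Dg Lg Q R P : Matrix (Fin n) (Fin n) ℝ)
    (hAsymm : A.IsSymm)
    (hAg : ∀ i j : Fin n, Ag i j =
      if ((i : ℕ) < r ↔ (j : ℕ) < r) then A i j
      else if (i : ℕ) < r then γ * A i j
      else γ⁻¹ * A i j)
    (hDg : Dg = Matrix.diagonal (fun i : Fin n =>
      (∑ j : Fin n, if ((i : ℕ) < r ↔ (j : ℕ) < r) then A i j else 0) -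
      (∑ j : Fin n, if ((i : ℕ) < r ↔ (j : ℕ) < r) then 0 else A i j)))
    (hLg : Lg = Dg - Ag)
    (hQ : Q = Matrix.diagonal (fun i : Fin n => if (i : ℕ) < r then γ else 1))
    (hR : R = Matrix.diagonal (fun i : Fin n => if (i : ℕ) < r then (-1 : ℝ) else 1))
    (hP : P = R * Q⁻¹) :
    P * Lg * P⁻¹ = Dg - R * A * R⁻¹ ∧ (P * Lg * P⁻¹).IsSymm := by
  have hq : ∀ i : Fin n, (if (i : ℕ) < r then γ else 1) ≠ 0 := fun i => by
    split_ifs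
    exacts [hγ.ne', one_ne_zero]
  have hQdet : IsUnit Q.det := hQ ▸ isUnit_det_diagonal_of_ne_zero hq
  have hAg_conj : Ag = Q * A * Q⁻¹ := by
    ext i j
    rw [hQ, diagonal_conj_apply hq, hAg]
    split_ifs <;> first | tauto | field_simp
  have hRR : R * R = 1 := by
    rw [hR, diagonal_mul_diagonal, ← diagonal_one]
    exact congrArg diagonal (funext fun i => by split_ifs <;> norm_num)
  have hRdet : IsUnit R.det := isUnit_det_of_left_inverse hRR
  have hQDg : Q * Dg * Q⁻¹ = Dg :=
    conj_eq_self_of_commute hQdet (hQ ▸ hDg ▸ commute_diagonal _ _)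
  have hRDg : R * Dg * R⁻¹ = Dg :=
    conj_eq_self_of_commute hRdet (hR ▸ hDg ▸ commute_diagonal _ _)
  have hLg_conj : Lg = Q * (Dg - A) * Q⁻¹ := by
    rw [hLg, hAg_conj, Matrix.mul_sub, Matrix.sub_mul, hQDg]
  have key : P * Lg * P⁻¹ = Dg - R * A * R⁻¹ := by
    rw [hLg_conj, hP, mul_inv_conj_conj hQdet, Matrix.mul_sub, Matrix.sub_mul, hRDg]
  exact ⟨key, key ▸ (hDg ▸ isSymm_diagonal _).sub
    (hAsymm.conj_of_isSymm_of_mul_self_eq_one (hR ▸ isSymm_diagonal _) hRR)⟩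

/-- If `A` is symmetric, then the transformed generalized Laplacian
`L_gz := P L_g P⁻¹` equals `D_g − R A R⁻¹` and is a symmetric matrix, where
`P = R Q⁻¹`. -/
theorem transformed_laplacian_symmetric
    (n r : ℕ) (hn : 2 ≤ n) (hr : 1 ≤ r) (hrn : r < n)
    (γ : ℝ) (hγ : 0 < γ)
    (A Ag Dg Lg Q R P : Matrix (Fin n) (Fin n) ℝ)
    (hAsymm : A.IsSymm) (hA0 : ∀ i : Fin n, A i i = 0)
    (hAg : ∀ i j : Fin n, Ag i j =
      if ((i : ℕ) < r ↔ (j : ℕ) < r) then A i j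
      else if (i : ℕ) < r then γ * A i j
      else γ⁻¹ * A i j)
    (hDg : Dg = Matrix.diagonal (fun i : Fin n =>
      (∑ j : Fin n, if ((i : ℕ) < r ↔ (j : ℕ) < r) then A i j else 0) -
      (∑ j : Fin n, if ((i : ℕ) < r ↔ (j : ℕ) < r) then 0 else A i j)))
    (hLg : Lg = Dg - Ag)
    (hQ : Q = Matrix.diagonal (fun i : Fin n => if (i : ℕ) < r then γ else 1))
    (hR : R = Matrix.diagonal (fun i : Fin n => if (i : ℕ) < r then (-1 : ℝ) else 1))
    (hP : P = R * Q⁻¹) :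
    P * Lg * P⁻¹ = Dg - R * A * R⁻¹ ∧ (P * Lg * P⁻¹).IsSymm :=
  transformed_laplacian_symmetric_general n r γ hγ A Ag Dg Lg Q R P hAsymm hAg hDg hLg hQ hR hP
end

section
/- The transformed generalized Laplacian has zero row sums: (P L_g P^{-1}) 𝟙_n = 0. Equivalently, the vector v ∈ ℝ^n with v_i = −γ for i ∈ V1 and v_i = 1 for i ∈ V2 satisfies L_g v = 0, so 0 is an eigenvalue of the generalized Laplacian L_g with eigenvector v. -/
/-!
Let `w` be the vector equal to `-γ` on `V₁` and `1` on `V₂`, and `W = diag w`. Then `Q R = W`, so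
`P = W⁻¹`, and `A_g W = W S`, where `S` is `A` with the entries between `V₁` and `V₂` negated.
The diagonal `D_g` is exactly the matrix of row sums of `S`, hence `L_g W = W L` for the Laplacian
`L = D_g - S` of `S`. Thus `P L_g P⁻¹ = L` has zero row sums, and `L_g w = L_g W 𝟙 = W L 𝟙 = 0`.
-/

open Matrix

variable {ι K : Type*} [Field K]

def rowSumLaplacian [Fintype ι] [DecidableEq ι] (M : Matrix ι ι K) : Matrix ι ι K :=
  diagonal (fun i => ∑ j, M i j) - M

theorem rowSumLaplacian_mulVec_one [Fintype ι] [DecidableEq ι] (M : Matrix ι ι K) :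
    rowSumLaplacian M *ᵥ 1 = 0 := by
  ext i
  rw [rowSumLaplacian, sub_mulVec, Pi.sub_apply, mulVec_diagonal]
  simp [mulVec, dotProduct]

section Partition

variable (p : ι → Prop) [DecidablePred p]

def blockVec (a b : K) : ι → K := fun i => if p i then a else b

def signedAdj (A : Matrix ι ι K) : Matrix ι ι K :=
  of fun i j => if (p i ↔ p j) then A i j else -A i j

theorem sum_signedAdj [Fintype ι] (A : Matrix ι ι K) (i : ι) :
    ∑ j, signedAdj p A i j =
      (∑ j, if (p i ↔ p j) then A i j else 0) - ∑ j, if (p i ↔ p j) then 0 else A i j := by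
  rw [← Finset.sum_sub_distrib]
  refine Finset.sum_congr rfl fun j _ => ?_
  simp only [signedAdj, of_apply]
  split_ifs <;> ring

variable {p}

theorem mul_diagonal_blockVec_eq [Fintype ι] [DecidableEq ι] {γ : K} (hγ : γ ≠ 0)
    {A Ag : Matrix ι ι K}
    (hAg : ∀ i j, Ag i j =
      if (p i ↔ p j) then A i j else if p i then γ * A i j else γ⁻¹ * A i j) :
    Ag * diagonal (blockVec p (-γ) 1) = diagonal (blockVec p (-γ) 1) * signedAdj p A := by
  ext i j
  simp only [mul_diagonal, diagonal_mul, hAg, blockVec, signedAdj, of_apply]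
  by_cases hi : p i <;> by_cases hj : p j <;> simp [hi, hj] <;> field_simp

theorem laplacian_mul_diagonal_blockVec_eq [Fintype ι] [DecidableEq ι] {γ : K} (hγ : γ ≠ 0)
    {A Ag : Matrix ι ι K}
    (hAg : ∀ i j, Ag i j =
      if (p i ↔ p j) then A i j else if p i then γ * A i j else γ⁻¹ * A i j) :
    (diagonal (fun i => ∑ j, signedAdj p A i j) - Ag) * diagonal (blockVec p (-γ) 1) =
      diagonal (blockVec p (-γ) 1) * rowSumLaplacian (signedAdj p A) := by
  rw [sub_mul, mul_diagonal_blockVec_eq hγ hAg, rowSumLaplacian, mul_sub, diagonal_mul_diagonal,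
    diagonal_mul_diagonal]
  congr 2
  exact mul_comm _ _

end Partition

theorem generalized_laplacian_zero_eigenvalue_general
    (n r : ℕ) (hrn : r < n)
    (γ : ℝ) (hγ : 0 < γ)
    (A Ag Dg Lg Q R P : Matrix (Fin n) (Fin n) ℝ)
    (hAg : ∀ i j : Fin n, Ag i j =
      if ((i : ℕ) < r ↔ (j : ℕ) < r) then A i j
      else if (i : ℕ) < r then γ * A i j
      else γ⁻¹ * A i j)
    (hDg : Dg = Matrix.diagonal (fun i : Fin n =>
      (∑ j : Fin n, if ((i : ℕ) < r ↔ (j : ℕ) < r) then A i j else 0) -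
      (∑ j : Fin n, if ((i : ℕ) < r ↔ (j : ℕ) < r) then 0 else A i j)))
    (hLg : Lg = Dg - Ag)
    (hQ : Q = Matrix.diagonal (fun i : Fin n => if (i : ℕ) < r then γ else 1))
    (hR : R = Matrix.diagonal (fun i : Fin n => if (i : ℕ) < r then (-1 : ℝ) else 1))
    (hP : P = R * Q⁻¹)
    (v : Fin n → ℝ)
    (hv : v = fun i : Fin n => if (i : ℕ) < r then -γ else 1) :
    (P * Lg * P⁻¹) *ᵥ (fun _ : Fin n => (1 : ℝ)) = 0 ∧ Lg *ᵥ v = 0 ∧ v ≠ 0 := by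
  let p : Fin n → Prop := fun i => (i : ℕ) < r
  have hQR : Q * R = diagonal v := by
    rw [hQ, hR, hv, diagonal_mul_diagonal]
    congr 1
    ext i
    split_ifs <;> ring
  have hRR : R * R = 1 := by
    rw [hR, diagonal_mul_diagonal, ← diagonal_one]
    congr 1
    ext i
    split_ifs <;> ring
  have hdet : IsUnit (diagonal v).det := by
    refine (isUnit_diagonal.mpr (Pi.isUnit_iff.mpr fun i => ?_)).map detMonoidHom
    simp only [hv]
    split_ifs <;> simp [hγ.ne']
  have hPW : P = (diagonal v)⁻¹ := by
    rw [hP, ← hQR, Matrix.mul_inv_rev, inv_eq_left_inv hRR]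
  have hLW : Lg * diagonal v = diagonal v * rowSumLaplacian (signedAdj p A) := by
    rw [hLg, hDg, hv, ← funext (sum_signedAdj p A)]
    exact laplacian_mul_diagonal_blockVec_eq hγ.ne' hAg
  refine ⟨?_, ?_, fun h => by simpa [hv, hrn.not_ge] using congrFun h ⟨r, hrn⟩⟩
  · rw [hPW, nonsing_inv_nonsing_inv _ hdet, mul_assoc, hLW, ← mul_assoc, nonsing_inv_mul _ hdet,
      one_mul]
    exact rowSumLaplacian_mulVec_one _
  · have hv1 : diagonal v *ᵥ 1 = v := by
      ext i
      simp [mulVec_diagonal]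
    rw [← hv1, mulVec_mulVec, hLW, ← mulVec_mulVec, rowSumLaplacian_mulVec_one, mulVec_zero]

/-- The transformed generalized Laplacian has zero row sums:
`(P L_g P⁻¹) 𝟙_n = 0`.  Equivalently, the vector `v` with `v_i = −γ` for `i ∈ V1` and
`v_i = 1` for `i ∈ V2` satisfies `L_g v = 0`, so `0` is an eigenvalue of `L_g` with
eigenvector `v`. -/
theorem generalized_laplacian_zero_eigenvalue
    (n r : ℕ) (hn : 2 ≤ n) (hr : 1 ≤ r) (hrn : r < n)
    (γ : ℝ) (hγ : 0 < γ)
    (A Ag Dg Lg Q R P : Matrix (Fin n) (Fin n) ℝ)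
    (hA0 : ∀ i : Fin n, A i i = 0)
    (hAg : ∀ i j : Fin n, Ag i j =
      if ((i : ℕ) < r ↔ (j : ℕ) < r) then A i j
      else if (i : ℕ) < r then γ * A i j
      else γ⁻¹ * A i j)
    (hDg : Dg = Matrix.diagonal (fun i : Fin n =>
      (∑ j : Fin n, if ((i : ℕ) < r ↔ (j : ℕ) < r) then A i j else 0) -
      (∑ j : Fin n, if ((i : ℕ) < r ↔ (j : ℕ) < r) then 0 else A i j)))
    (hLg : Lg = Dg - Ag)
    (hQ : Q = Matrix.diagonal (fun i : Fin n => if (i : ℕ) < r then γ else 1))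
    (hR : R = Matrix.diagonal (fun i : Fin n => if (i : ℕ) < r then (-1 : ℝ) else 1))
    (hP : P = R * Q⁻¹)
    (v : Fin n → ℝ)
    (hv : v = fun i : Fin n => if (i : ℕ) < r then -γ else 1) :
    (P * Lg * P⁻¹) *ᵥ (fun _ : Fin n => (1 : ℝ)) = 0 ∧ Lg *ᵥ v = 0 ∧ v ≠ 0 :=
  generalized_laplacian_zero_eigenvalue_general n r hrn γ hγ A Ag Dg Lg Q R P hAg hDg hLg hQ hR hP v
    hv
end

section
/- If A is symmetric, then every (complex) eigenvalue of the generalized Laplacian L_g is real; that is, although L_g is in general not symmetric, it is similar to the symmetric matrix D_g − R A R^{-1}, and hence its characteristic polynomial has only real roots. -/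
/-!
Conjugating `L_g` by `diag(γ⁻¹, …, γ⁻¹, 1, …, 1)` cancels the weights `γ`, `γ⁻¹` on the
off-diagonal blocks and leaves the diagonal `D_g` untouched, so `L_g` is similar to the real
symmetric matrix `D_g - A`. Over `ℂ` that matrix is Hermitian, and the roots of the characteristic
polynomial of a Hermitian matrix are its eigenvalues, which are real.
-/

open Polynomial Matrix

namespace Matrix

lemma IsSymm.isHermitian_map_ofReal {n : Type*} {A : Matrix n n ℝ} (hA : A.IsSymm) :
    (A.map (algebraMap ℝ ℂ)).IsHermitian :=
  (isHermitian_iff_isSymm.mpr hA).map _ fun x => (Complex.conj_ofReal x).symm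

variable {n : Type*} [Fintype n] [DecidableEq n]

lemma charpoly_mul_mul_of_mul_eq_one {R : Type*} [CommRing R] {P Q : Matrix n n R}
    (M : Matrix n n R) (h : Q * P = 1) : (P * M * Q).charpoly = M.charpoly := by
  rw [mul_assoc, charpoly_mul_comm, mul_assoc, h, mul_one]

lemma charpoly_diagonal_mul_mul_diagonal_inv {K : Type*} [Field K] (M : Matrix n n K)
    {d : n → K} (hd : ∀ i, d i ≠ 0) : (diagonal d * M * diagonal d⁻¹).charpoly = M.charpoly :=
  charpoly_mul_mul_of_mul_eq_one M <| by
    rw [diagonal_mul_diagonal, ← diagonal_one]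
    exact congrArg diagonal (funext fun i => inv_mul_cancel₀ (hd i))

lemma diagonal_mul_mul_diagonal_inv_apply {K : Type*} [Field K] (M : Matrix n n K) (d : n → K)
    (i j : n) : (diagonal d * M * diagonal d⁻¹) i j = d i * M i j / d j := by
  rw [mul_diagonal, diagonal_mul, Pi.inv_apply, div_eq_mul_inv]

lemma IsHermitian.im_eq_zero_of_isRoot_charpoly {𝕜 : Type*} [RCLike 𝕜] {A : Matrix n n 𝕜}
    (hA : A.IsHermitian) {μ : 𝕜} (hμ : A.charpoly.IsRoot μ) : RCLike.im μ = 0 := by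
  rw [← mem_roots (charpoly_monic A).ne_zero, hA.roots_charpoly_eq_eigenvalues] at hμ
  obtain ⟨i, -, rfl⟩ := Multiset.mem_map.mp hμ
  exact RCLike.ofReal_im _

end Matrix

lemma conj_diagonal_sub_blockWeighted {ι K : Type*} [Fintype ι] [DecidableEq ι] [Field K]
    (s : ι → Prop) [DecidablePred s] {γ : K} (hγ : γ ≠ 0) {A Ag : Matrix ι ι K}
    (hAg : ∀ i j, Ag i j = if (s i ↔ s j) then A i j else if s i then γ * A i j else γ⁻¹ * A i j)
    (d : ι → K) :
    diagonal (fun i => if s i then γ⁻¹ else 1) * (diagonal d - Ag) *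
      diagonal (fun i => if s i then γ⁻¹ else 1)⁻¹ = diagonal d - A := by
  ext i j
  rw [diagonal_mul_mul_diagonal_inv_apply, Matrix.sub_apply, Matrix.sub_apply, hAg]
  by_cases hij : i = j
  · subst hij
    rw [if_pos Iff.rfl]
    split_ifs <;> field_simp
  · by_cases hi : s i <;> by_cases hj : s j <;> simp [hi, hj, hij] <;> field_simp

theorem generalized_laplacian_real_eigenvalues_general
    (n r : ℕ)
    (γ : ℝ) (hγ : 0 < γ)
    (A Ag Dg Lg : Matrix (Fin n) (Fin n) ℝ)
    (hAsymm : A.IsSymm)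
    (hAg : ∀ i j : Fin n, Ag i j =
      if ((i : ℕ) < r ↔ (j : ℕ) < r) then A i j
      else if (i : ℕ) < r then γ * A i j
      else γ⁻¹ * A i j)
    (hDg : Dg = Matrix.diagonal (fun i : Fin n =>
      (∑ j : Fin n, if ((i : ℕ) < r ↔ (j : ℕ) < r) then A i j else 0) -
      (∑ j : Fin n, if ((i : ℕ) < r ↔ (j : ℕ) < r) then 0 else A i j)))
    (hLg : Lg = Dg - Ag) :
    ∀ μ : ℂ, (Matrix.charpoly (Lg.map (algebraMap ℝ ℂ))).IsRoot μ → μ.im = 0 := by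
  intro μ hμ
  have hsimilar : Lg.charpoly = (Dg - A).charpoly := by
    rw [hLg, hDg, ← conj_diagonal_sub_blockWeighted (fun i : Fin n => (i : ℕ) < r) hγ.ne' hAg,
      charpoly_diagonal_mul_mul_diagonal_inv]
    intro i
    split_ifs <;> simp [hγ.ne']
  have hsymm : (Dg - A).IsSymm := hDg ▸ (isSymm_diagonal _).sub hAsymm
  refine hsymm.isHermitian_map_ofReal.im_eq_zero_of_isRoot_charpoly ?_
  rwa [charpoly_map, ← hsimilar, ← charpoly_map]

/-- If `A` is symmetric, then every (complex) eigenvalue of the generalized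
Laplacian `L_g` is real; i.e., every complex root of its characteristic polynomial has
zero imaginary part. -/
theorem generalized_laplacian_real_eigenvalues
    (n r : ℕ) (hn : 2 ≤ n) (hr : 1 ≤ r) (hrn : r < n)
    (γ : ℝ) (hγ : 0 < γ)
    (A Ag Dg Lg : Matrix (Fin n) (Fin n) ℝ)
    (hAsymm : A.IsSymm) (hA0 : ∀ i : Fin n, A i i = 0)
    (hAg : ∀ i j : Fin n, Ag i j =
      if ((i : ℕ) < r ↔ (j : ℕ) < r) then A i j
      else if (i : ℕ) < r then γ * A i j
      else γ⁻¹ * A i j)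
    (hDg : Dg = Matrix.diagonal (fun i : Fin n =>
      (∑ j : Fin n, if ((i : ℕ) < r ↔ (j : ℕ) < r) then A i j else 0) -
      (∑ j : Fin n, if ((i : ℕ) < r ↔ (j : ℕ) < r) then 0 else A i j)))
    (hLg : Lg = Dg - Ag) :
    ∀ μ : ℂ, (Matrix.charpoly (Lg.map (algebraMap ℝ ℂ))).IsRoot μ → μ.im = 0 :=
  generalized_laplacian_real_eigenvalues_general n r γ hγ A Ag Dg Lg hAsymm hAg hDg hLg
end

section
/- A signed network G admitting at least one GQSB bipartition has a unique GQSB bipartition if and only if its positive subgraph G_+ has exactly 2 connected components; in that case G is quasi-structurally balanced, and whenever G_+ has p > 2 components the GQSB bipartition is non-unique. -/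
/-!
Since adjacency in `G₊` is symmetric, the GQSB condition says exactly that no positive edge
crosses between the two sides: a GQSB bipartition is a splitting `(W, Wᶜ)` of the vertices into
two nonempty unions of connected components of `G₊`. With two components the only such
splitting is into the two components themselves; with three or more, each component set against
the rest gives a different one.
-/

def IsGQSBBipartition {V : Type*} [Fintype V] [DecidableEq V]
    (A : V → V → ℝ) (W₁ W₂ : Finset V) : Prop :=
  W₁.Nonempty ∧ W₂.Nonempty ∧ Disjoint W₁ W₂ ∧ W₁ ∪ W₂ = Finset.univ ∧
    ∀ i ∈ W₁, ∀ j ∈ W₂, A i j ≤ 0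

namespace SimpleGraph

variable {V : Type*} {G : SimpleGraph V}

theorem Reachable.mem_of_forall_not_adj {W : Set V} (hW : ∀ i ∈ W, ∀ j ∉ W, ¬G.Adj i j)
    {i j : V} (hij : G.Reachable i j) (hi : i ∈ W) : j ∈ W := by
  by_contra hj
  obtain ⟨p⟩ := hij
  obtain ⟨d, -, hd₁, hd₂⟩ := p.exists_boundary_dart W hi hj
  exact hW _ hd₁ _ hd₂ d.adj

theorem reachable_iff_mem_of_card_two (h2 : Nat.card G.ConnectedComponent = 2) {W : Set V}
    (hW : ∀ i ∈ W, ∀ j ∉ W, ¬G.Adj i j) {i k : V} (hi : i ∈ W) (hk : k ∉ W) (j : V) :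
    G.Reachable i j ↔ j ∈ W := by
  refine ⟨fun hij => hij.mem_of_forall_not_adj hW hi, fun hj => ?_⟩
  have apart : ∀ v ∈ W, G.connectedComponentMk v ≠ G.connectedComponentMk k := fun v hv h =>
    hk ((ConnectedComponent.exact h).mem_of_forall_not_adj hW hv)
  obtain ⟨c, -, hc⟩ := (Nat.card_eq_two_iff' (G.connectedComponentMk k)).mp h2
  exact ConnectedComponent.exact ((hc _ (apart i hi)).trans (hc _ (apart j hj)).symm)

theorem reachable_of_card_two (h2 : Nat.card G.ConnectedComponent = 2) {W : Set V}
    (hW : ∀ i ∈ W, ∀ j ∉ W, ¬G.Adj i j) (hWc : Wᶜ.Nonempty) {i j : V} (hi : i ∈ W)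
    (hj : j ∈ W) : G.Reachable i j :=
  (reachable_iff_mem_of_card_two h2 hW hi hWc.some_mem j).mpr hj

theorem forall_not_adj_compl {W : Set V} (hW : ∀ i ∈ W, ∀ j ∉ W, ¬G.Adj i j) :
    ∀ i ∈ Wᶜ, ∀ j ∉ Wᶜ, ¬G.Adj i j := fun i hi j hj h =>
  hW j (Set.not_notMem.mp hj) i hi h.symm

theorem eq_or_eq_compl_of_card_two (h2 : Nat.card G.ConnectedComponent = 2) {W U : Set V}
    (hW : ∀ i ∈ W, ∀ j ∉ W, ¬G.Adj i j) (hU : ∀ i ∈ U, ∀ j ∉ U, ¬G.Adj i j)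
    (hWne : W.Nonempty) (hWc : Wᶜ.Nonempty) (hUne : U.Nonempty) (hUc : Uᶜ.Nonempty) :
    W = U ∨ W = Uᶜ := by
  obtain ⟨i, hi⟩ := hWne
  obtain ⟨k, hk⟩ := hWc
  have hWi := reachable_iff_mem_of_card_two h2 hW hi hk
  by_cases hiU : i ∈ U
  · obtain ⟨k', hk'⟩ := hUc
    have hUi := reachable_iff_mem_of_card_two h2 hU hiU hk'
    exact Or.inl (Set.ext fun j => (hWi j).symm.trans (hUi j))
  · obtain ⟨k', hk'⟩ := hUne
    have hUi := reachable_iff_mem_of_card_two h2 (forall_not_adj_compl hU) hiU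
      (Set.not_notMem.mpr hk')
    exact Or.inr (Set.ext fun j => (hWi j).symm.trans (hUi j))

end SimpleGraph

section GQSB

open SimpleGraph

variable {V : Type*} [Fintype V] [DecidableEq V] {A : V → V → ℝ} {G : SimpleGraph V}

theorem isGQSBBipartition_iff (hG : ∀ i j, G.Adj i j ↔ 0 < A i j) {W₁ W₂ : Finset V} :
    IsGQSBBipartition A W₁ W₂ ↔
      W₂ = W₁ᶜ ∧ W₁.Nonempty ∧ W₁ᶜ.Nonempty ∧ ∀ i ∈ W₁, ∀ j ∉ W₁, ¬G.Adj i j := by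
  constructor
  · rintro ⟨hne₁, hne₂, hdisj, hcover, hA⟩
    obtain rfl : W₂ = W₁ᶜ := IsCompl.eq_compl
      ⟨hdisj.symm, codisjoint_iff.mpr (by rwa [Finset.sup_eq_union, Finset.union_comm])⟩
    exact ⟨rfl, hne₁, hne₂, fun i hi j hj h =>
      ((hG i j).mp h).not_ge (hA i hi j (Finset.mem_compl.mpr hj))⟩
  · rintro ⟨rfl, hne₁, hne₂, hW⟩
    exact ⟨hne₁, hne₂, disjoint_compl_right, Finset.union_compl W₁, fun i hi j hj =>
      not_lt.mp fun h => hW i hi j (Finset.mem_compl.mp hj) ((hG i j).mpr h)⟩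

theorem IsGQSBBipartition.reachable_of_card_two (hG : ∀ i j, G.Adj i j ↔ 0 < A i j)
    (h2 : Nat.card G.ConnectedComponent = 2) {W₁ W₂ : Finset V}
    (hW : IsGQSBBipartition A W₁ W₂) :
    (∀ i ∈ W₁, ∀ j ∈ W₁, G.Reachable i j) ∧ (∀ i ∈ W₂, ∀ j ∈ W₂, G.Reachable i j) := by
  obtain ⟨rfl, hne, hcne, hcl⟩ := (isGQSBBipartition_iff hG).mp hW
  have hcl' : ∀ i ∈ (W₁ : Set V), ∀ j ∉ (W₁ : Set V), ¬G.Adj i j := hcl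
  refine ⟨fun i hi j hj => G.reachable_of_card_two h2 hcl' ?_ hi hj, fun i hi j hj =>
    G.reachable_of_card_two h2 (G.forall_not_adj_compl hcl') ?_ (Finset.mem_compl.mp hi)
      (Finset.mem_compl.mp hj)⟩
  · rwa [← Finset.coe_compl, Finset.coe_nonempty]
  · simpa using hne

theorem IsGQSBBipartition.sym2_eq_of_card_two (hG : ∀ i j, G.Adj i j ↔ 0 < A i j)
    (h2 : Nat.card G.ConnectedComponent = 2) {W₁ W₂ U₁ U₂ : Finset V}
    (hW : IsGQSBBipartition A W₁ W₂) (hU : IsGQSBBipartition A U₁ U₂) :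
    s(W₁, W₂) = s(U₁, U₂) := by
  obtain ⟨rfl, hWne, hWc, hWcl⟩ := (isGQSBBipartition_iff hG).mp hW
  obtain ⟨rfl, hUne, hUc, hUcl⟩ := (isGQSBBipartition_iff hG).mp hU
  rcases G.eq_or_eq_compl_of_card_two h2 (W := W₁) (U := U₁) hWcl hUcl (by simpa using hWne)
    (by rwa [← Finset.coe_compl, Finset.coe_nonempty]) (by simpa using hUne)
    (by rwa [← Finset.coe_compl, Finset.coe_nonempty]) with h | h
  · rw [Finset.coe_inj.mp h]
  · rw [← Finset.coe_compl, Finset.coe_inj] at h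
    rw [h, compl_compl, Sym2.eq_swap]

theorem exists_isGQSBBipartition_sym2_ne_of_two_lt_card (hG : ∀ i j, G.Adj i j ↔ 0 < A i j)
    (h3 : 2 < Nat.card G.ConnectedComponent) :
    ∃ W U : Finset V, IsGQSBBipartition A W Wᶜ ∧ IsGQSBBipartition A U Uᶜ ∧
      s(W, Wᶜ) ≠ s(U, Uᶜ) := by
  classical
  have : Fintype G.ConnectedComponent := Fintype.ofFinite _
  rw [Nat.card_eq_fintype_card] at h3
  obtain ⟨c₁, c₂, c₃, h12, h13, h23⟩ := Fintype.two_lt_card_iff.mp h3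
  obtain ⟨v₃, hv₃⟩ := c₃.nonempty_supp
  have notMem_supp : ∀ c c' : G.ConnectedComponent, c ≠ c' → ∀ v ∈ c'.supp, v ∉ c.supp :=
    fun c c' h v hv hv' => h (hv'.symm.trans hv)
  have bip : ∀ c : G.ConnectedComponent, c ≠ c₃ →
      IsGQSBBipartition A c.supp.toFinset c.supp.toFinsetᶜ := fun c hc =>
    (isGQSBBipartition_iff hG).mpr ⟨rfl, by simpa using c.nonempty_supp,
      ⟨v₃, by simpa using notMem_supp c c₃ hc v₃ hv₃⟩,
      fun i hi j hj h =>
        hj (Set.mem_toFinset.mpr ((c.mem_supp_congr_adj h).mp (Set.mem_toFinset.mp hi)))⟩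
  refine ⟨_, _, bip c₁ h13, bip c₂ h23, fun h => ?_⟩
  rcases Sym2.eq_iff.mp h with ⟨h, -⟩ | ⟨h, -⟩
  · exact h12 (ConnectedComponent.supp_inj.mp (Set.toFinset_inj.mp h))
  · exact notMem_supp c₁ c₃ h13 v₃ hv₃ (Set.mem_toFinset.mp
      (h ▸ Finset.mem_compl.mpr (mt Set.mem_toFinset.mp (notMem_supp c₂ c₃ h23 v₃ hv₃))))

end GQSB

theorem gqsb_bipartition_unique_iff_general
    {V : Type*} [Fintype V] [DecidableEq V]
    (A : V → V → ℝ)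
    (Gp : SimpleGraph V) (hGp : ∀ i j : V, Gp.Adj i j ↔ 0 < A i j)
    (p : ℕ) (hp : p = Nat.card Gp.ConnectedComponent) (hp2 : 2 ≤ p)
    (S : Set (Sym2 (Finset V)))
    (hS : S = { s : Sym2 (Finset V) | ∃ W₁ W₂ : Finset V,
      s = s(W₁, W₂) ∧ IsGQSBBipartition A W₁ W₂ })
    (hSne : S.Nonempty) :
    ((∃! s, s ∈ S) ↔ p = 2) ∧
    (p = 2 → ∀ W₁ W₂ : Finset V, IsGQSBBipartition A W₁ W₂ →
      (∀ i ∈ W₁, ∀ j ∈ W₁, Gp.Reachable i j) ∧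
      (∀ i ∈ W₂, ∀ j ∈ W₂, Gp.Reachable i j)) ∧
    (2 < p → ∃ s₁ ∈ S, ∃ s₂ ∈ S, s₁ ≠ s₂) := by
  subst hp
  have nonunique (h3 : 2 < Nat.card Gp.ConnectedComponent) : ∃ s₁ ∈ S, ∃ s₂ ∈ S, s₁ ≠ s₂ := by
    obtain ⟨W, U, hW, hU, hne⟩ := exists_isGQSBBipartition_sym2_ne_of_two_lt_card hGp h3
    exact ⟨_, hS ▸ ⟨W, _, rfl, hW⟩, _, hS ▸ ⟨U, _, rfl, hU⟩, hne⟩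
  refine ⟨⟨fun ⟨s, _, hs⟩ => ?_, fun h2 => ?_⟩,
    fun h2 _ _ hW => hW.reachable_of_card_two hGp h2, nonunique⟩
  · by_contra h2
    obtain ⟨s₁, hs₁, s₂, hs₂, hne⟩ := nonunique (lt_of_le_of_ne hp2 (Ne.symm h2))
    exact hne ((hs s₁ hs₁).trans (hs s₂ hs₂).symm)
  · subst hS
    obtain ⟨_, ⟨U₁, U₂, rfl, hU⟩⟩ := hSne
    exact ⟨_, ⟨U₁, U₂, rfl, hU⟩, fun _ ⟨W₁, W₂, hs, hW⟩ =>
      hs.trans (hW.sym2_eq_of_card_two hGp h2 hU)⟩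

/-- A signed network admitting at least one GQSB bipartition has a unique
(unordered) GQSB bipartition if and only if its positive subgraph `G₊` has exactly `2`
connected components; in that case the network is quasi-structurally balanced (any two
vertices in the same subset are joined by a positive path), and whenever `G₊` has
`p > 2` components, the GQSB bipartition is non-unique. -/
theorem gqsb_bipartition_unique_iff
    {V : Type*} [Fintype V] [DecidableEq V]
    (A : V → V → ℝ) (hAsymm : ∀ i j : V, A i j = A j i) (hA0 : ∀ i : V, A i i = 0)
    (Gp : SimpleGraph V) (hGp : ∀ i j : V, Gp.Adj i j ↔ 0 < A i j)
    (p : ℕ) (hp : p = Nat.card Gp.ConnectedComponent) (hp2 : 2 ≤ p)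
    (S : Set (Sym2 (Finset V)))
    (hS : S = { s : Sym2 (Finset V) | ∃ W₁ W₂ : Finset V,
      s = s(W₁, W₂) ∧ IsGQSBBipartition A W₁ W₂ })
    (hSne : S.Nonempty) :
    ((∃! s, s ∈ S) ↔ p = 2) ∧
    (p = 2 → ∀ W₁ W₂ : Finset V, IsGQSBBipartition A W₁ W₂ →
      (∀ i ∈ W₁, ∀ j ∈ W₁, Gp.Reachable i j) ∧
      (∀ i ∈ W₂, ∀ j ∈ W₂, Gp.Reachable i j)) ∧
    (2 < p → ∃ s₁ ∈ S, ∃ s₂ ∈ S, s₁ ≠ s₂) :=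
  gqsb_bipartition_unique_iff_general A Gp hGp p hp hp2 S hS hSne
end

section
/- Let L ∈ ℝ^{n×n} be symmetric positive semi-definite with L𝟙_n = 0 and with 0 a simple eigenvalue (equivalently, the kernel of L is exactly the span of the all-ones vector 𝟙_n). Then for every initial vector z_0 ∈ ℝ^n, the matrix-exponential flow converges to average consensus: exp(−tL) z_0 → (1/n) 𝟙_n 𝟙_n^T z_0 as t → ∞. -/
/-!
In an orthonormal eigenbasis of `L`, the flow `exp (-t • L)` multiplies the coordinate along an
eigenvector of eigenvalue `λ ≥ 0` by `exp (-t * λ)`, which tends to `1` if `λ = 0` and to `0`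
otherwise. So `exp (-t • L)` converges to the orthogonal projection onto `ker L = span 𝟙`, which
sends `z` to its average times `𝟙`.
-/

open scoped Matrix InnerProductSpace ComplexOrder
open Filter Topology

lemma Real.tendsto_exp_neg_mul_atTop {a : ℝ} (ha : 0 ≤ a) :
    Tendsto (fun t => Real.exp (-t * a)) atTop (𝓝 (Set.indicator {0} 1 a)) := by
  rcases ha.eq_or_lt with rfl | ha
  · simp
  · rw [Set.indicator_of_notMem (Set.notMem_singleton_iff.mpr ha.ne')]
    exact Real.tendsto_exp_comp_nhds_zero.mpr (tendsto_neg_atTop_atBot.atBot_mul_const ha)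

lemma EuclideanSpace.starProjection_span_const_one {𝕜 ι : Type*} [RCLike 𝕜] [Fintype ι]
    (x : EuclideanSpace 𝕜 ι) :
    (𝕜 ∙ WithLp.toLp 2 (fun _ : ι => (1 : 𝕜))).starProjection x =
      WithLp.toLp 2 (fun _ => (∑ i, x i) / Fintype.card ι) := by
  rw [Submodule.starProjection_singleton]
  ext j
  simp [EuclideanSpace.norm_eq, PiLp.inner_apply]

namespace Matrix.IsHermitian

variable {𝕜 ι : Type*} [RCLike 𝕜] [Fintype ι] [DecidableEq ι] {A : Matrix ι ι 𝕜}
  (hA : A.IsHermitian)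

lemma exp_smul (s : ℝ) :
    NormedSpace.exp (s • A) = hA.cfc (fun x => Real.exp (s * x)) := by
  let U : (Matrix ι ι 𝕜)ˣ := Unitary.toUnits hA.eigenvectorUnitary
  have hsA : s • A = (U : Matrix ι ι 𝕜) * diagonal (RCLike.ofReal ∘ fun i => s * hA.eigenvalues i)
      * ((U⁻¹ : (Matrix ι ι 𝕜)ˣ) : Matrix ι ι 𝕜) := by
    conv_lhs => rw [hA.spectral_theorem, Unitary.conjStarAlgAut_apply]
    rw [← smul_mul_assoc, ← mul_smul_comm, ← diagonal_smul]
    congr 3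
    funext i
    simp [RCLike.real_smul_eq_coe_smul (K := 𝕜)]
  rw [hsA, Matrix.exp_units_conj, exp_diagonal, IsHermitian.cfc, Unitary.conjStarAlgAut_apply]
  congr 3
  funext i
  rw [Function.comp_apply, Function.comp_apply, Real.exp_eq_exp_ℝ,
    ← RCLike.algebraMap_eq_ofReal, NormedSpace.algebraMap_exp_comm, Pi.exp_def]
  rfl

lemma tendsto_cfc {α : Type*} {l : Filter α} {f : α → ℝ → ℝ} {g : ℝ → ℝ}
    (h : ∀ i, Tendsto (fun a => f a (hA.eigenvalues i)) l (𝓝 (g (hA.eigenvalues i)))) :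
    Tendsto (fun a => hA.cfc (f a)) l (𝓝 (hA.cfc g)) := by
  simp only [IsHermitian.cfc, Unitary.conjStarAlgAut_apply]
  refine (Tendsto.const_mul _ ?_).mul_const _
  refine (continuous_id.matrix_diagonal.tendsto _).comp (tendsto_pi_nhds.mpr fun i => ?_)
  exact (RCLike.continuous_ofReal.tendsto _).comp (h i)

lemma toEuclideanLin_eigenvectorBasis (i : ι) :
    toEuclideanLin A (hA.eigenvectorBasis i) =
      (hA.eigenvalues i : 𝕜) • hA.eigenvectorBasis i := by
  rw [toLpLin_apply, hA.mulVec_eigenvectorBasis, RCLike.real_smul_eq_coe_smul (K := 𝕜)]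
  rfl

lemma toEuclideanLin_cfc_eigenvectorBasis (f : ℝ → ℝ) (i : ι) :
    toEuclideanLin (hA.cfc f) (hA.eigenvectorBasis i) =
      (f (hA.eigenvalues i) : 𝕜) • hA.eigenvectorBasis i := by
  rw [toLpLin_apply, IsHermitian.cfc, Unitary.conjStarAlgAut_apply, ← mulVec_mulVec,
    ← mulVec_mulVec, star_eigenvectorUnitary_mulVec, diagonal_mulVec_single, ← smul_eq_mul,
    Pi.single_smul, mulVec_smul, eigenvectorUnitary_mulVec]
  rfl

lemma toEuclideanLin_cfc_apply (f : ℝ → ℝ) (x : EuclideanSpace 𝕜 ι) :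
    toEuclideanLin (hA.cfc f) x =
      ∑ i, ((f (hA.eigenvalues i) : 𝕜) * ⟪hA.eigenvectorBasis i, x⟫_𝕜) •
        hA.eigenvectorBasis i := by
  conv_lhs => rw [← hA.eigenvectorBasis.sum_repr' x]
  simp only [map_sum, map_smul, toEuclideanLin_cfc_eigenvectorBasis, smul_smul, mul_comm]

lemma inner_eigenvectorBasis_eq_zero_of_mem_ker {i : ι} (hi : hA.eigenvalues i ≠ 0)
    {v : EuclideanSpace 𝕜 ι} (hv : v ∈ LinearMap.ker (toEuclideanLin A)) :
    ⟪hA.eigenvectorBasis i, v⟫_𝕜 = 0 := by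
  have h := (isSymmetric_toEuclideanLin_iff.mpr hA) (hA.eigenvectorBasis i) v
  rw [toEuclideanLin_eigenvectorBasis, LinearMap.mem_ker.mp hv, inner_zero_right,
    inner_smul_left, RCLike.conj_ofReal, mul_eq_zero] at h
  exact h.resolve_left (by exact_mod_cast hi)

lemma starProjection_ker_toEuclideanLin (x : EuclideanSpace 𝕜 ι) :
    (LinearMap.ker (toEuclideanLin A)).starProjection x =
      toEuclideanLin (hA.cfc (Set.indicator {0} 1)) x := by
  refine Submodule.eq_starProjection_of_mem_of_inner_eq_zero ?mem fun v hv => ?orth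
  case mem =>
    simp only [LinearMap.mem_ker, toEuclideanLin_cfc_apply, map_sum, map_smul,
      toEuclideanLin_eigenvectorBasis, smul_smul]
    refine Finset.sum_eq_zero fun i _ => ?_
    by_cases hi : hA.eigenvalues i = 0 <;> simp [hi]
  case orth =>
    rw [toEuclideanLin_cfc_apply]
    nth_rw 1 [← hA.eigenvectorBasis.sum_repr' x]
    rw [← Finset.sum_sub_distrib, sum_inner]
    refine Finset.sum_eq_zero fun i _ => ?_
    by_cases hi : hA.eigenvalues i = 0
    · simp [hi]
    · simp [hi, inner_smul_left, hA.inner_eigenvectorBasis_eq_zero_of_mem_ker hi hv]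

end Matrix.IsHermitian

lemma Matrix.PosSemidef.tendsto_exp_neg_smul {𝕜 ι : Type*} [RCLike 𝕜] [Fintype ι]
    [DecidableEq ι] {A : Matrix ι ι 𝕜} (hA : A.PosSemidef) :
    Tendsto (fun t : ℝ => NormedSpace.exp ((-t) • A)) atTop
      (𝓝 (hA.isHermitian.cfc (Set.indicator {0} 1))) := by
  simp only [hA.isHermitian.exp_smul]
  exact hA.isHermitian.tendsto_cfc fun i =>
    Real.tendsto_exp_neg_mul_atTop (hA.eigenvalues_nonneg i)

theorem laplacian_flow_average_consensus_general
    (n : ℕ) (L : Matrix (Fin n) (Fin n) ℝ)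
    (hPSD : L.PosSemidef)
    (hker : ∀ v : Fin n → ℝ, L *ᵥ v = 0 ↔ ∃ c : ℝ, v = fun _ : Fin n => c)
    (z0 : Fin n → ℝ) :
    Filter.Tendsto
      (fun t : ℝ => (NormedSpace.exp ((-t) • L)) *ᵥ z0)
      Filter.atTop
      (nhds (((1 : ℝ) / n) •
        ((Matrix.vecMulVec (fun _ : Fin n => (1 : ℝ)) (fun _ : Fin n => (1 : ℝ))) *ᵥ z0))) := by
  have hK : LinearMap.ker (Matrix.toEuclideanLin L) = ℝ ∙ WithLp.toLp 2 fun _ => 1 := by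
    ext v
    simp only [LinearMap.mem_ker, Matrix.toLpLin_apply, WithLp.toLp_eq_zero, hker,
      Submodule.mem_span_singleton]
    refine exists_congr fun c => ?_
    rw [eq_comm, WithLp.ext_iff]
    simp [funext_iff]
  have hP := hPSD.isHermitian.starProjection_ker_toEuclideanLin (WithLp.toLp 2 z0)
  simp only [hK, EuclideanSpace.starProjection_span_const_one] at hP
  have hlim : ((1 : ℝ) / n) • (Matrix.vecMulVec (fun _ : Fin n => (1 : ℝ)) (fun _ => 1) *ᵥ z0) =
      hPSD.isHermitian.cfc (Set.indicator {0} 1) *ᵥ z0 := by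
    rw [← WithLp.toLp_injective 2 |>.eq_iff, ← Matrix.toLpLin_apply, ← hP]
    ext j
    simp [Matrix.vecMulVec, Matrix.mulVec, dotProduct, div_eq_inv_mul]
  rw [hlim]
  exact ((continuous_id.matrix_mulVec continuous_const).tendsto _).comp hPSD.tendsto_exp_neg_smul

/-- If `L` is symmetric positive semi-definite with `L 𝟙 = 0` and kernel
exactly the span of the all-ones vector, then the flow `exp(−tL) z₀` converges to
average consensus `(1/n) 𝟙 𝟙ᵀ z₀` as `t → ∞`. -/
theorem laplacian_flow_average_consensus
    (n : ℕ) (L : Matrix (Fin n) (Fin n) ℝ)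
    (hPSD : L.PosSemidef)
    (hones : L *ᵥ (fun _ : Fin n => (1 : ℝ)) = 0)
    (hker : ∀ v : Fin n → ℝ, L *ᵥ v = 0 ↔ ∃ c : ℝ, v = fun _ : Fin n => c)
    (z0 : Fin n → ℝ) :
    Filter.Tendsto
      (fun t : ℝ => (NormedSpace.exp ((-t) • L)) *ᵥ z0)
      Filter.atTop
      (nhds (((1 : ℝ) / n) •
        ((Matrix.vecMulVec (fun _ : Fin n => (1 : ℝ)) (fun _ : Fin n => (1 : ℝ))) *ᵥ z0))) :=
  laplacian_flow_average_consensus_general n L hPSD hker z0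
end
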